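/- Let T be a tree in the family F (built from P_4 by operations O1 and O2 as described). Then LV(T) is the unique minimum restrained dominating set of T, and moreover LV(T) is the unique maximum packing of T; in particular γ_r(T) = ρ(T) = |LV(T)|. -/

import Mathlib

open SimpleGraph Finset

/-- D is a restrained dominating set of the graph G restricted to vertex set vs. -/
def IsRDSOn (G : SimpleGraph ℕ) (vs D : Finset ℕ) : Prop :=
  D ⊆ vs ∧ ∀ v ∈ vs, v ∉ D → (∃ u ∈ D, G.Adj v u) ∧ ∃ u ∈ vs, u ∉ D ∧ G.Adj v u

/-- The restrained domination number of G on vertex set vs. -/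
noncomputable def rdnOn (G : SimpleGraph ℕ) (vs : Finset ℕ) : ℕ :=
  sInf {n | ∃ D : Finset ℕ, IsRDSOn G vs D ∧ D.card = n}

open Classical in
/-- f is a restrained Italian dominating function of G on vertex set vs. -/
def IsRIDFOn (G : SimpleGraph ℕ) (vs : Finset ℕ) (f : ℕ → ℕ) : Prop :=
  (∀ v ∈ vs, f v ≤ 2) ∧
  (∀ v ∈ vs, f v = 0 → 2 ≤ ∑ u ∈ vs.filter (fun u => G.Adj v u), f u) ∧
  (∀ v ∈ vs, f v = 0 → ∃ u ∈ vs, G.Adj v u ∧ f u = 0)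

/-- The restrained Italian domination number of G on vertex set vs. -/
noncomputable def ridnOn (G : SimpleGraph ℕ) (vs : Finset ℕ) : ℕ :=
  sInf {n | ∃ f : ℕ → ℕ, IsRIDFOn G vs f ∧ ∑ v ∈ vs, f v = n}

/-- The family 𝓕 of trees built from P₄ by operations O1 (attach an end-vertex of a new
P₃ to a vertex of LV) and O2 (attach the center of a new healthy spider S_{t,t} to a
vertex of LV).  `InF G vs lv` means: the graph G with vertex set vs is in the family,
with lv the set LV of vertices that were leaves at some stage of the construction. -/
inductive InF : SimpleGraph ℕ → Finset ℕ → Finset ℕ → Prop where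
  | base (a b c d : ℕ) (hab : a ≠ b) (hac : a ≠ c) (had : a ≠ d) (hbc : b ≠ c)
      (hbd : b ≠ d) (hcd : c ≠ d) :
      InF (SimpleGraph.fromEdgeSet {s(a, b), s(b, c), s(c, d)}) {a, b, c, d} {a, d}
  | o1 (G : SimpleGraph ℕ) (vs lv : Finset ℕ) (x u v w : ℕ) (hG : InF G vs lv)
      (hx : x ∈ lv) (hu : u ∉ vs) (hv : v ∉ vs) (hw : w ∉ vs)
      (huv : u ≠ v) (huw : u ≠ w) (hvw : v ≠ w) :
      InF (G ⊔ SimpleGraph.fromEdgeSet {s(x, u), s(u, v), s(v, w)})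
        (vs ∪ {u, v, w}) (lv ∪ {w})
  | o2 (G : SimpleGraph ℕ) (vs lv : Finset ℕ) (x : ℕ) (t : ℕ) (u : ℕ)
      (mid lf : Fin t → ℕ) (ht : 1 ≤ t) (hG : InF G vs lv) (hx : x ∈ lv)
      (hu : u ∉ vs) (hmid : ∀ i, mid i ∉ vs) (hlf : ∀ i, lf i ∉ vs)
      (hinj : Function.Injective
        (fun p : Fin t ⊕ Fin t ⊕ Unit => Sum.elim mid (Sum.elim lf fun _ => u) p)) :
      InF (G ⊔ SimpleGraph.fromEdgeSet
          (({s(x, u)} : Set (Sym2 ℕ)) ∪ ⋃ i : Fin t, {s(u, mid i), s(mid i, lf i)}))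
        (vs ∪ ({u} ∪ Finset.image mid Finset.univ ∪ Finset.image lf Finset.univ))
        (lv ∪ Finset.image lf Finset.univ)


/-!
`LV` is a packing that dominates the tree, and a packing is never larger than a dominating set
(each vertex dominates at most one member of a packing); hence `γ_r(T) = ρ(T) = |LV|`.

The base `P₄` and operation O1 are attachments of the spider `S_{1,1}`, so every tree of `𝓕`
arises from a single vertex by attaching spiders at vertices of `LV`. Uniqueness is proved along
this construction in two forms that survive an attachment: a restrained dominating set `D` in which
no vertex of `LV ∩ D` has a neighbour in `D` contains `LV`, and a packing at least as large as `LV`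
is `LV`. A minimum restrained dominating set has the first property, since removing such a
neighbour would leave a set that still dominates `LV`.
-/

section Packing

variable {V : Type*} {G : SimpleGraph V}

/-- Closed neighbourhoods of distinct members are disjoint: `3 ≤ G.dist` for reachable vertices. -/
def IsPacking (G : SimpleGraph V) (P : Finset V) : Prop :=
  ∀ a ∈ P, ∀ b ∈ P, ∀ z, (G.Adj a z ∨ a = z) → (G.Adj b z ∨ b = z) → a = b

lemma isPacking_of_three_le_dist {P : Finset V}
    (hP : ∀ a ∈ P, ∀ b ∈ P, a ≠ b → 3 ≤ G.dist a b) : IsPacking G P := by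
  intro a ha b hb z haz hbz
  by_contra hne
  have h3 := hP a ha b hb hne
  have hr : G.Reachable a b := Reachable.of_dist_ne_zero (by omega)
  have h2 : G.edist a b ≤ 2 := calc
    G.edist a b ≤ G.edist a z + G.edist z b := G.edist_triangle
    _ ≤ 1 + 1 := add_le_add (edist_le_one_iff_adj_or_eq.2 haz)
        (edist_comm ▸ edist_le_one_iff_adj_or_eq.2 hbz)
    _ = 2 := one_add_one_eq_two
  rw [← hr.coe_dist_eq_edist] at h2
  have : G.dist a b ≤ 2 := by exact_mod_cast h2
  omega

lemma IsPacking.three_le_dist {P : Finset V} (hP : IsPacking G P) {a b : V} (ha : a ∈ P)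
    (hb : b ∈ P) (hne : a ≠ b) (hr : G.Reachable a b) : 3 ≤ G.dist a b := by
  have h2 : 2 < G.edist a b := two_lt_edist_iff.2
    ⟨hne, fun h => hne (hP a ha b hb b (.inl h) (.inr rfl)), by
      ext z
      simp only [mem_commonNeighbors, Set.mem_empty_iff_false, iff_false, not_and]
      exact fun haz hzb => hne (hP a ha b hb z (.inl haz) (.inl hzb))⟩
  rw [← hr.coe_dist_eq_edist] at h2
  have : 2 < G.dist a b := by exact_mod_cast h2
  omega

lemma IsPacking.mono {G' : SimpleGraph V} {P : Finset V} (hP : IsPacking G' P) (h : G ≤ G') :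
    IsPacking G P :=
  fun a ha b hb z haz hbz => hP a ha b hb z (haz.imp_left (@h _ _)) (hbz.imp_left (@h _ _))

lemma IsPacking.subset {P Q : Finset V} (hP : IsPacking G P) (hQ : Q ⊆ P) : IsPacking G Q :=
  fun a ha b hb => hP a (hQ ha) b (hQ hb)

lemma IsPacking.card_le {P D : Finset V} (hP : IsPacking G P)
    (hD : ∀ p ∈ P, ∃ d ∈ D, G.Adj p d ∨ p = d) : P.card ≤ D.card :=
  card_le_card_of_forall_subsingleton (fun p d => G.Adj p d ∨ p = d) hD
    fun d _ a ha b hb => hP a ha.1 b hb.1 d ha.2 hb.2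

end Packing

section Restrained

variable {G : SimpleGraph ℕ} {vs D : Finset ℕ}

lemma IsRDSOn.exists_adj_or_eq (hD : IsRDSOn G vs D) {v : ℕ} (hv : v ∈ vs) :
    ∃ d ∈ D, G.Adj v d ∨ v = d := by
  by_cases hvD : v ∈ D
  · exact ⟨v, hvD, .inr rfl⟩
  · obtain ⟨d, hd, hvd⟩ := (hD.2 v hv hvD).1
    exact ⟨d, hd, .inl hvd⟩

lemma IsRDSOn.mem_of_forall_adj_eq (hD : IsRDSOn G vs D) {v w : ℕ} (hv : v ∈ vs)
    (hw : ∀ z, G.Adj v z → z = w) : v ∈ D := by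
  by_contra hvD
  obtain ⟨⟨d, hd, hvd⟩, e, -, he, hve⟩ := hD.2 v hv hvD
  exact he (hw e hve ▸ (hw d hvd).symm ▸ hd)

lemma IsRDSOn.not_adj_of_card_le (hD : IsRDSOn G vs D) {L : Finset ℕ} (hL : IsPacking G L)
    (hLvs : L ⊆ vs) (hcard : D.card ≤ L.card) {q z : ℕ} (hqL : q ∈ L) (hqD : q ∈ D)
    (hzD : z ∈ D) : ¬ G.Adj q z := by
  intro hqz
  have hdom : ∀ p ∈ L, ∃ d ∈ D.erase z, G.Adj p d ∨ p = d := by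
    intro p hp
    by_cases hpD : p ∈ D
    · refine ⟨p, mem_erase.2 ⟨?_, hpD⟩, .inr rfl⟩
      rintro rfl
      exact G.ne_of_adj hqz (hL q hqL p hp p (.inl hqz) (.inr rfl))
    · obtain ⟨d, hd, hpd⟩ := (hD.2 p (hLvs hp) hpD).1
      refine ⟨d, mem_erase.2 ⟨?_, hd⟩, .inl hpd⟩
      rintro rfl
      exact hpD (hL p hp q hqL d (.inl hpd) (.inl hqz) ▸ hqD)
  have hlt := (hL.card_le hdom).trans_lt (card_erase_lt_of_mem hzD)
  omega

lemma rdnOn_eq_card {D₀ : Finset ℕ} (hD₀ : IsRDSOn G vs D₀)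
    (hmin : ∀ D, IsRDSOn G vs D → D₀.card ≤ D.card) : rdnOn G vs = D₀.card := by
  refine le_antisymm (Nat.sInf_le ⟨D₀, hD₀, rfl⟩) ?_
  obtain ⟨D, hD, hcard⟩ := Nat.sInf_mem (s := {n | ∃ D, IsRDSOn G vs D ∧ D.card = n})
    ⟨_, D₀, hD₀, rfl⟩
  rw [rdnOn, ← hcard]
  exact hmin D hD

end Restrained

section Spider

variable {t : ℕ}

/-- Operation O2: the spider with centre `u` and legs `u – mid i – lf i`, joined to `x` by `xu`. -/
def spiderEdges (x u : ℕ) (mid lf : Fin t → ℕ) : Set (Sym2 ℕ) :=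
  ({s(x, u)} : Set (Sym2 ℕ)) ∪ ⋃ i : Fin t, {s(u, mid i), s(mid i, lf i)}

def attachSpider (G : SimpleGraph ℕ) (x u : ℕ) (mid lf : Fin t → ℕ) : SimpleGraph ℕ :=
  G ⊔ fromEdgeSet (spiderEdges x u mid lf)

structure IsSpiderAttachment (G : SimpleGraph ℕ) (vs : Finset ℕ) (x u : ℕ)
    (mid lf : Fin t → ℕ) : Prop where
  mem_of_adj : ∀ ⦃a b⦄, G.Adj a b → a ∈ vs
  x_mem : x ∈ vs
  u_not_mem : u ∉ vs
  mid_not_mem : ∀ i, mid i ∉ vs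
  lf_not_mem : ∀ i, lf i ∉ vs
  injective : Function.Injective
    (fun p : Fin t ⊕ Fin t ⊕ Unit => Sum.elim mid (Sum.elim lf fun _ => u) p)

lemma attachSpider_adj_iff {G : SimpleGraph ℕ} {x u : ℕ} {mid lf : Fin t → ℕ} {a b : ℕ} :
    (attachSpider G x u mid lf).Adj a b ↔ G.Adj a b ∨
      (s(a, b) = s(x, u) ∨ ∃ i, s(a, b) = s(u, mid i) ∨ s(a, b) = s(mid i, lf i)) ∧ a ≠ b := by
  simp [attachSpider, spiderEdges, fromEdgeSet_adj, or_assoc]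

lemma mem_union_spider_iff {vs : Finset ℕ} {u : ℕ} {mid lf : Fin t → ℕ} {z : ℕ} :
    z ∈ vs ∪ ({u} ∪ image mid univ ∪ image lf univ) ↔
      z ∈ vs ∨ z = u ∨ (∃ i, mid i = z) ∨ ∃ i, lf i = z := by
  simp [or_left_comm]

namespace IsSpiderAttachment

variable {G : SimpleGraph ℕ} {vs : Finset ℕ} {x u : ℕ} {mid lf : Fin t → ℕ}

lemma mid_injective (hS : IsSpiderAttachment G vs x u mid lf) : Function.Injective mid :=
  fun i j h => Sum.inl_injective (hS.injective (a₁ := .inl i) (a₂ := .inl j) h)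

lemma lf_injective (hS : IsSpiderAttachment G vs x u mid lf) : Function.Injective lf :=
  fun i j h => by simpa using hS.injective (a₁ := .inr (.inl i)) (a₂ := .inr (.inl j)) h

lemma mid_ne_lf (hS : IsSpiderAttachment G vs x u mid lf) (i j : Fin t) : mid i ≠ lf j :=
  fun h => by simpa using hS.injective (a₁ := .inl i) (a₂ := .inr (.inl j)) h

lemma mid_ne_u (hS : IsSpiderAttachment G vs x u mid lf) (i : Fin t) : mid i ≠ u :=
  fun h => by simpa using hS.injective (a₁ := .inl i) (a₂ := .inr (.inr ())) h

lemma lf_ne_u (hS : IsSpiderAttachment G vs x u mid lf) (i : Fin t) : lf i ≠ u :=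
  fun h => by simpa using hS.injective (a₁ := .inr (.inl i)) (a₂ := .inr (.inr ())) h

lemma ne_of_mem (hS : IsSpiderAttachment G vs x u mid lf) {a : ℕ} (ha : a ∈ vs) :
    a ≠ u ∧ (∀ i, a ≠ mid i) ∧ ∀ i, a ≠ lf i :=
  ⟨fun h => hS.u_not_mem (h ▸ ha), fun i h => hS.mid_not_mem i (h ▸ ha),
    fun i h => hS.lf_not_mem i (h ▸ ha)⟩

lemma adj_lf_iff (hS : IsSpiderAttachment G vs x u mid lf) (i : Fin t) (z : ℕ) :
    (attachSpider G x u mid lf).Adj (lf i) z ↔ z = mid i := by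
  have hx_old := hS.ne_of_mem hS.x_mem
  rw [attachSpider_adj_iff, or_iff_right fun h => hS.lf_not_mem i (hS.mem_of_adj h)]
  simp only [Sym2.eq_iff]
  grind [hS.lf_injective.eq_iff, hS.mid_ne_lf, hS.lf_ne_u, hS.mid_ne_u]

lemma adj_mid_iff (hS : IsSpiderAttachment G vs x u mid lf) (i : Fin t) (z : ℕ) :
    (attachSpider G x u mid lf).Adj (mid i) z ↔ z = u ∨ z = lf i := by
  have hx_old := hS.ne_of_mem hS.x_mem
  rw [attachSpider_adj_iff, or_iff_right fun h => hS.mid_not_mem i (hS.mem_of_adj h)]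
  simp only [Sym2.eq_iff]
  grind [hS.mid_injective.eq_iff, hS.mid_ne_lf, hS.lf_ne_u, hS.mid_ne_u]

lemma adj_u_iff (hS : IsSpiderAttachment G vs x u mid lf) (z : ℕ) :
    (attachSpider G x u mid lf).Adj u z ↔ z = x ∨ ∃ i, z = mid i := by
  have hx_old := hS.ne_of_mem hS.x_mem
  rw [attachSpider_adj_iff, or_iff_right fun h => hS.u_not_mem (hS.mem_of_adj h)]
  simp only [Sym2.eq_iff]
  grind [hS.mid_ne_lf, hS.lf_ne_u, hS.mid_ne_u]

lemma adj_iff_of_mem (hS : IsSpiderAttachment G vs x u mid lf) {a : ℕ} (ha : a ∈ vs) (z : ℕ) :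
    (attachSpider G x u mid lf).Adj a z ↔ G.Adj a z ∨ a = x ∧ z = u := by
  have hx_old := hS.ne_of_mem hS.x_mem
  have ha_old := hS.ne_of_mem ha
  rw [attachSpider_adj_iff]
  simp only [Sym2.eq_iff]
  grind

lemma adj_x_u (hS : IsSpiderAttachment G vs x u mid lf) : (attachSpider G x u mid lf).Adj x u :=
  (hS.adj_iff_of_mem hS.x_mem u).2 (.inr ⟨rfl, rfl⟩)

lemma adj_u_mid (hS : IsSpiderAttachment G vs x u mid lf) (i : Fin t) :
    (attachSpider G x u mid lf).Adj u (mid i) :=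
  (hS.adj_u_iff _).2 (.inr ⟨i, rfl⟩)

lemma adj_mid_lf (hS : IsSpiderAttachment G vs x u mid lf) (i : Fin t) :
    (attachSpider G x u mid lf).Adj (mid i) (lf i) :=
  (hS.adj_mid_iff i _).2 (.inr rfl)

lemma mem_of_adj_attachSpider (hS : IsSpiderAttachment G vs x u mid lf) {a b : ℕ}
    (h : (attachSpider G x u mid lf).Adj a b) :
    a ∈ vs ∪ ({u} ∪ image mid univ ∪ image lf univ) := by
  rw [mem_union_spider_iff]
  rcases attachSpider_adj_iff.1 h with h | ⟨h, -⟩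
  · exact .inl (hS.mem_of_adj h)
  · simp only [Sym2.eq_iff] at h
    grind [hS.x_mem]

lemma isRDSOn_inter (hS : IsSpiderAttachment G vs x u mid lf) {D : Finset ℕ}
    (hD : IsRDSOn (attachSpider G x u mid lf) (vs ∪ ({u} ∪ image mid univ ∪ image lf univ)) D)
    (hxD : x ∈ D) : IsRDSOn G vs (D ∩ vs) := by
  refine ⟨inter_subset_right, fun v hv hvD => ?_⟩
  have hvD' : v ∉ D := fun h => hvD (mem_inter.2 ⟨h, hv⟩)
  have hold : ∀ z, (attachSpider G x u mid lf).Adj v z → G.Adj v z ∧ z ∈ vs := fun z h =>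
    have hvz := ((hS.adj_iff_of_mem hv z).1 h).resolve_right fun h => hvD' (h.1 ▸ hxD)
    ⟨hvz, hS.mem_of_adj hvz.symm⟩
  obtain ⟨⟨d, hd, hvd⟩, e, -, he, hve⟩ := hD.2 v (mem_union_left _ hv) hvD'
  obtain ⟨hvd, hdvs⟩ := hold d hvd
  obtain ⟨hve, hevs⟩ := hold e hve
  exact ⟨⟨d, mem_inter.2 ⟨hd, hdvs⟩, hvd⟩, e, hevs, fun h => he (mem_inter.1 h).1, hve⟩

end IsSpiderAttachment

end Spider

structure LVInvariant (G : SimpleGraph ℕ) (vs lv : Finset ℕ) : Prop where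
  subset : lv ⊆ vs
  mem_of_adj : ∀ ⦃a b⦄, G.Adj a b → a ∈ vs
  reachable : ∀ a ∈ vs, ∀ b ∈ vs, G.Reachable a b
  isRDSOn : IsRDSOn G vs lv
  isPacking : IsPacking G lv
  subset_of_isRDSOn : ∀ D, IsRDSOn G vs D → (∀ q ∈ lv, q ∈ D → ∀ z ∈ D, ¬ G.Adj q z) → lv ⊆ D
  eq_of_isPacking : ∀ P ⊆ vs, IsPacking G P → lv.card ≤ P.card → P = lv

namespace LVInvariant

variable {G : SimpleGraph ℕ} {vs lv : Finset ℕ}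

lemma card_le_of_isRDSOn (hI : LVInvariant G vs lv) {D : Finset ℕ} (hD : IsRDSOn G vs D) :
    lv.card ≤ D.card :=
  hI.isPacking.card_le fun _ hp => hD.exists_adj_or_eq (hI.subset hp)

lemma eq_of_isRDSOn (hI : LVInvariant G vs lv) {D : Finset ℕ} (hD : IsRDSOn G vs D)
    (hcard : D.card ≤ lv.card) : D = lv :=
  (eq_of_subset_of_card_le (hI.subset_of_isRDSOn D hD fun _ hq hqD _ hzD =>
    hD.not_adj_of_card_le hI.isPacking hI.subset hcard hq hqD hzD) hcard).symm

lemma card_le_of_isPacking (hI : LVInvariant G vs lv) {P : Finset ℕ} (hPvs : P ⊆ vs)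
    (hP : IsPacking G P) : P.card ≤ lv.card :=
  hP.card_le fun _ hp => hI.isRDSOn.exists_adj_or_eq (hPvs hp)

lemma three_le_dist (hI : LVInvariant G vs lv) {a b : ℕ} (ha : a ∈ lv) (hb : b ∈ lv)
    (hne : a ≠ b) : 3 ≤ G.dist a b :=
  hI.isPacking.three_le_dist ha hb hne (hI.reachable a (hI.subset ha) b (hI.subset hb))

section AttachSpider

variable {x t u : ℕ} {mid lf : Fin t → ℕ}

lemma reachable_attachSpider (hI : LVInvariant G vs lv) (hS : IsSpiderAttachment G vs x u mid lf)
    {a : ℕ} (ha : a ∈ vs ∪ ({u} ∪ image mid univ ∪ image lf univ)) :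
    (attachSpider G x u mid lf).Reachable a x := by
  have hux := hS.adj_x_u.symm.reachable
  rcases mem_union_spider_iff.1 ha with ha | rfl | ⟨i, rfl⟩ | ⟨i, rfl⟩
  · exact (hI.reachable a ha x hS.x_mem).mono le_sup_left
  · exact hux
  · exact (hS.adj_u_mid i).symm.reachable.trans hux
  · exact (hS.adj_mid_lf i).symm.reachable.trans ((hS.adj_u_mid i).symm.reachable.trans hux)

lemma isRDSOn_attachSpider (hI : LVInvariant G vs lv) (hS : IsSpiderAttachment G vs x u mid lf)
    (hx : x ∈ lv) (ht : 0 < t) :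
    IsRDSOn (attachSpider G x u mid lf) (vs ∪ ({u} ∪ image mid univ ∪ image lf univ))
      (lv ∪ image lf univ) := by
  refine ⟨union_subset_union hI.subset subset_union_right, fun v hv hvD => ?_⟩
  have hnew : ∀ z, z ∉ lv → (∀ i, lf i ≠ z) → z ∉ lv ∪ image lf univ := fun z hz hlf => by
    simp [hz, hlf]
  rcases mem_union_spider_iff.1 hv with hv | rfl | ⟨i, rfl⟩ | ⟨i, rfl⟩
  · obtain ⟨⟨d, hd, hvd⟩, e, he, helv, hve⟩ :=
      hI.isRDSOn.2 v hv fun h => hvD (mem_union_left _ h)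
    refine ⟨⟨d, mem_union_left _ hd, le_sup_left (b := fromEdgeSet _) hvd⟩,
      e, mem_union_left _ he, ?_, le_sup_left (b := fromEdgeSet _) hve⟩
    exact hnew e helv fun i h => hS.lf_not_mem i (h ▸ he)
  · let i₀ : Fin t := ⟨0, ht⟩
    exact ⟨⟨x, mem_union_left _ hx, hS.adj_x_u.symm⟩, mid i₀, mem_union_spider_iff.2 (by simp),
      hnew _ (fun h => hS.mid_not_mem i₀ (hI.subset h)) fun j h => hS.mid_ne_lf i₀ j h.symm,
      hS.adj_u_mid i₀⟩
  · exact ⟨⟨lf i, mem_union_right _ (mem_image_of_mem _ (mem_univ i)), hS.adj_mid_lf i⟩,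
      u, mem_union_spider_iff.2 (by simp), hnew _ (fun h => hS.u_not_mem (hI.subset h)) hS.lf_ne_u,
      (hS.adj_u_mid i).symm⟩
  · exact absurd (mem_union_right _ (mem_image_of_mem _ (mem_univ i))) hvD

lemma isPacking_attachSpider (hI : LVInvariant G vs lv) (hS : IsSpiderAttachment G vs x u mid lf) :
    IsPacking (attachSpider G x u mid lf) (lv ∪ image lf univ) := by
  have hnbr : ∀ a ∈ lv ∪ image lf univ, ∀ z, ((attachSpider G x u mid lf).Adj a z ∨ a = z) →
      a ∈ lv ∧ (G.Adj a z ∨ a = z) ∨ (a = x ∧ z = u) ∨ ∃ i, a = lf i ∧ (z = mid i ∨ z = lf i) := by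
    intro a ha z haz
    rcases mem_union.1 ha with ha | ha
    · rw [hS.adj_iff_of_mem (hI.subset ha)] at haz
      tauto
    · obtain ⟨i, -, rfl⟩ := mem_image.1 ha
      rw [hS.adj_lf_iff] at haz
      exact .inr (.inr ⟨i, rfl, haz.imp_right Eq.symm⟩)
  have hvs : ∀ c ∈ lv, ∀ z, (G.Adj c z ∨ c = z) → z ∈ vs := fun c hc z h =>
    h.elim (fun h => hS.mem_of_adj h.symm) fun h => h ▸ hI.subset hc
  have hx_old := hS.ne_of_mem hS.x_mem
  intro a ha b hb z haz hbz
  rcases hnbr a ha z haz with ⟨ha, haz⟩ | ⟨hax, hzu⟩ | ⟨i, hai, hi⟩ <;>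
    rcases hnbr b hb z hbz with ⟨hb, hbz⟩ | ⟨hbx, hzu'⟩ | ⟨j, hbj, hj⟩
  all_goals first
    | exact hI.isPacking a ha b hb z haz hbz
    | grind [hS.u_not_mem, hS.mid_not_mem, hS.lf_not_mem, hS.lf_injective.eq_iff,
        hS.mid_injective.eq_iff, hS.mid_ne_lf, hS.mid_ne_u, hS.lf_ne_u]

/-- The new leaves lie in `D`, so `htight` keeps the middle vertices out of `D`; restraint then
forces `u ∉ D`, and domination of `u` forces `x ∈ D`, after which `D ∩ vs` is an RDS of the old
tree. -/
lemma subset_of_isRDSOn_attachSpider (hI : LVInvariant G vs lv)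
    (hS : IsSpiderAttachment G vs x u mid lf) (ht : 0 < t) {D : Finset ℕ}
    (hD : IsRDSOn (attachSpider G x u mid lf) (vs ∪ ({u} ∪ image mid univ ∪ image lf univ)) D)
    (htight : ∀ q ∈ lv ∪ image lf univ, q ∈ D → ∀ z ∈ D, ¬ (attachSpider G x u mid lf).Adj q z) :
    lv ∪ image lf univ ⊆ D := by
  have hlf : ∀ i, lf i ∈ lv ∪ image lf univ := fun i =>
    mem_union_right _ (mem_image_of_mem _ (mem_univ i))
  have hlfD : ∀ i, lf i ∈ D := fun i =>
    hD.mem_of_forall_adj_eq (mem_union_spider_iff.2 (by simp)) fun z h => (hS.adj_lf_iff i z).1 h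
  have hmidD : ∀ i, mid i ∉ D := fun i h =>
    htight (lf i) (hlf i) (hlfD i) (mid i) h (hS.adj_mid_lf i).symm
  have huD : u ∉ D := by
    intro huD
    let i₀ : Fin t := ⟨0, ht⟩
    obtain ⟨-, e, -, heD, he⟩ := hD.2 (mid i₀) (mem_union_spider_iff.2 (by simp)) (hmidD i₀)
    rcases (hS.adj_mid_iff i₀ e).1 he with rfl | rfl
    exacts [heD huD, heD (hlfD i₀)]
  have hxD : x ∈ D := by
    obtain ⟨⟨d, hdD, hd⟩, -⟩ := hD.2 u (mem_union_spider_iff.2 (by simp)) huD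
    rcases (hS.adj_u_iff d).1 hd with rfl | ⟨i, rfl⟩
    exacts [hdD, absurd hdD (hmidD i)]
  have hlv : lv ⊆ D ∩ vs := hI.subset_of_isRDSOn _ (hS.isRDSOn_inter hD hxD)
    fun q hq hqD z hzD hqz => htight q (mem_union_left _ hq) (mem_inter.1 hqD).1 z
      (mem_inter.1 hzD).1 (le_sup_left (b := fromEdgeSet _) hqz)
  refine union_subset (hlv.trans inter_subset_left) ?_
  intro z hz
  obtain ⟨i, -, rfl⟩ := mem_image.1 hz
  exact hlfD i

/-- The old part of `P` is a packing of the old tree and the new part is a packing dominated by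
the `t` middle vertices, so both are extremal; then `x ∈ P` excludes `u` and the middle vertices. -/
lemma eq_of_isPacking_attachSpider (hI : LVInvariant G vs lv)
    (hS : IsSpiderAttachment G vs x u mid lf) (hx : x ∈ lv) (ht : 0 < t) {P : Finset ℕ}
    (hPvs : P ⊆ vs ∪ ({u} ∪ image mid univ ∪ image lf univ))
    (hP : IsPacking (attachSpider G x u mid lf) P) (hcard : (lv ∪ image lf univ).card ≤ P.card) :
    P = lv ∪ image lf univ := by
  have hlf_card : (image lf univ).card = t := by
    rw [card_image_of_injective _ hS.lf_injective, card_fin]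
  have hlv_card : (lv ∪ image lf univ).card = lv.card + t := by
    rw [card_union_of_disjoint, hlf_card]
    exact disjoint_left.2 fun z hz hz' => by
      obtain ⟨i, -, rfl⟩ := mem_image.1 hz'
      exact hS.lf_not_mem i (hI.subset hz)
  have hnew : ∀ p ∈ P \ vs, p = u ∨ (∃ i, mid i = p) ∨ ∃ i, lf i = p := fun p hp =>
    (mem_union_spider_iff.1 (hPvs (mem_sdiff.1 hp).1)).resolve_left (mem_sdiff.1 hp).2
  have hQ : IsPacking G (P ∩ vs) := (hP.subset inter_subset_left).mono le_sup_left
  have hQ_card : (P ∩ vs).card ≤ lv.card := hI.card_le_of_isPacking inter_subset_right hQ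
  have hR_card : (P \ vs).card ≤ t := by
    rw [← card_fin t, ← card_image_of_injective univ hS.mid_injective]
    refine (hP.subset sdiff_subset).card_le fun p hp => ?_
    rcases hnew p hp with rfl | ⟨i, rfl⟩ | ⟨i, rfl⟩
    · exact ⟨mid ⟨0, ht⟩, mem_image_of_mem _ (mem_univ _), .inl (hS.adj_u_mid _)⟩
    · exact ⟨mid i, mem_image_of_mem _ (mem_univ _), .inr rfl⟩
    · exact ⟨mid i, mem_image_of_mem _ (mem_univ _), .inl (hS.adj_mid_lf i).symm⟩
  have hsplit := card_inter_add_card_sdiff P vs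
  have hQ_eq : P ∩ vs = lv := hI.eq_of_isPacking _ inter_subset_right hQ (by omega)
  have hxP : x ∈ P := (mem_inter.1 (hQ_eq ▸ hx)).1
  have hxnew := hS.ne_of_mem hS.x_mem
  have hR : P \ vs ⊆ image lf univ := by
    intro p hp
    have hpP := (mem_sdiff.1 hp).1
    rcases hnew p hp with rfl | ⟨i, rfl⟩ | ⟨i, rfl⟩
    · exact absurd (hP x hxP p hpP x (.inr rfl) (.inl hS.adj_x_u.symm)) hxnew.1
    · exact absurd (hP x hxP _ hpP u (.inl hS.adj_x_u) (.inl (hS.adj_u_mid i).symm)) (hxnew.2.1 i)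
    · exact mem_image_of_mem _ (mem_univ i)
  have hR_eq : P \ vs = image lf univ := eq_of_subset_of_card_le hR (by omega)
  rw [← hQ_eq, ← hR_eq, union_comm, sdiff_union_inter]

lemma attachSpider (hI : LVInvariant G vs lv) (hS : IsSpiderAttachment G vs x u mid lf)
    (hx : x ∈ lv) (ht : 0 < t) :
    LVInvariant (attachSpider G x u mid lf) (vs ∪ ({u} ∪ image mid univ ∪ image lf univ))
      (lv ∪ image lf univ) where
  subset := union_subset_union hI.subset subset_union_right
  mem_of_adj _ _ h := hS.mem_of_adj_attachSpider h
  reachable _ ha _ hb :=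
    (reachable_attachSpider hI hS ha).trans (reachable_attachSpider hI hS hb).symm
  isRDSOn := isRDSOn_attachSpider hI hS hx ht
  isPacking := isPacking_attachSpider hI hS
  subset_of_isRDSOn _ hD htight := subset_of_isRDSOn_attachSpider hI hS ht hD htight
  eq_of_isPacking _ hPvs hP hcard := eq_of_isPacking_attachSpider hI hS hx ht hPvs hP hcard

end AttachSpider

lemma singleton (a : ℕ) : LVInvariant ⊥ {a} {a} where
  subset := subset_rfl
  mem_of_adj _ _ h := h.elim
  reachable _ ha _ hb := by rw [mem_singleton.1 ha, mem_singleton.1 hb]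
  isRDSOn := ⟨subset_rfl, fun _ hv hvD => absurd hv hvD⟩
  isPacking _ ha _ hb _ _ _ := (mem_singleton.1 ha).trans (mem_singleton.1 hb).symm
  subset_of_isRDSOn _ hD _ := singleton_subset_iff.2 <|
    hD.mem_of_forall_adj_eq (w := a) (mem_singleton_self a) fun _ h => h.elim
  eq_of_isPacking _ hP _ hcard := eq_of_subset_of_card_le hP hcard

lemma attachPath (hI : LVInvariant G vs lv) {x u v w : ℕ} (hx : x ∈ lv) (hu : u ∉ vs)
    (hv : v ∉ vs) (hw : w ∉ vs) (huv : u ≠ v) (huw : u ≠ w) (hvw : v ≠ w) :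
    LVInvariant (G ⊔ fromEdgeSet {s(x, u), s(u, v), s(v, w)}) (vs ∪ {u, v, w}) (lv ∪ {w}) := by
  have hS : IsSpiderAttachment G vs x u (fun _ : Fin 1 => v) (fun _ => w) :=
    ⟨hI.mem_of_adj, hI.subset hx, hu, fun _ => hv, fun _ => hw, by
      rintro (i | i | i) (j | j | j) h <;> simp_all [Fin.fin_one_eq_zero]⟩
  convert hI.attachSpider hS hx one_pos using 2
  · simp only [_root_.attachSpider, spiderEdges, Set.iUnion_const, Set.singleton_union]
  · simp only [image_const univ_nonempty, singleton_union, insert_union]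
  · exact (image_const univ_nonempty _).symm

end LVInvariant

theorem InF.lvInvariant {G : SimpleGraph ℕ} {vs lv : Finset ℕ} (h : InF G vs lv) :
    LVInvariant G vs lv := by
  induction h with
  | base a b c d hab hac had hbc hbd hcd =>
    simpa only [bot_sup_eq, singleton_union] using
      (LVInvariant.singleton a).attachPath (mem_singleton_self a) (by simpa using hab.symm)
        (by simpa using hac.symm) (by simpa using had.symm) hbc hbd hcd
  | o1 _ _ _ _ _ _ _ _ hx hu hv hw huv huw hvw ih => exact ih.attachPath hx hu hv hw huv huw hvw
  | o2 _ _ _ _ _ _ _ _ ht _ hx hu hmid hlf hinj ih =>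
    exact ih.attachSpider ⟨ih.mem_of_adj, ih.subset hx, hu, hmid, hlf, hinj⟩ hx ht

/-- For a tree T in the family 𝓕, LV(T) is the unique minimum restrained dominating set
and the unique maximum packing; in particular γ_r(T) = ρ(T) = |LV(T)|. -/
theorem lv_unique_min_rds_and_max_packing (G : SimpleGraph ℕ) (vs lv : Finset ℕ)
    (h : InF G vs lv) :
    IsRDSOn G vs lv ∧
    (∀ D : Finset ℕ, IsRDSOn G vs D → lv.card ≤ D.card ∧ (D.card = lv.card → D = lv)) ∧
    rdnOn G vs = lv.card ∧
    (∀ a ∈ lv, ∀ b ∈ lv, a ≠ b → 3 ≤ G.dist a b) ∧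
    (∀ P : Finset ℕ, P ⊆ vs → (∀ a ∈ P, ∀ b ∈ P, a ≠ b → 3 ≤ G.dist a b) →
      P.card ≤ lv.card ∧ (P.card = lv.card → P = lv)) := by
  have hI := h.lvInvariant
  refine ⟨hI.isRDSOn, fun D hD => ⟨hI.card_le_of_isRDSOn hD, fun hcard => ?_⟩,
    rdnOn_eq_card hI.isRDSOn fun _ => hI.card_le_of_isRDSOn,
    fun a ha b hb => hI.three_le_dist ha hb, fun P hPvs hP => ?_⟩
  · exact hI.eq_of_isRDSOn hD hcard.le
  · have hP' := isPacking_of_three_le_dist hP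
    exact ⟨hI.card_le_of_isPacking hPvs hP', fun hcard => hI.eq_of_isPacking P hPvs hP' hcard.ge⟩
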